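/- arXiv:2012.13781 — 2 statements merged into one kernel-verified Lean document; each statement's English description precedes it below -/
import Mathlib

section
/- Let (𝒫, ≤, {Δ_i}_{i∈𝒫}) be an admissible homological system for the finite-dimensional k-algebra Λ, with projectives indexed {P_i}_{i∈𝒫} as above, and let i, i₁, i₂ ∈ 𝒫 with ī₁ > ī and ī₂ > ī in 𝒫̄. Suppose 0 → M → E → N → 0 is a short exact sequence of finite-dimensional Λ-modules such that M admits an i₁-bounded projective resolution and N admits an i₂-bounded projective resolution. Then E admits an i-bounded projective resolution P_E with the additional property that every indecomposable direct summand of P_E^0 is isomorphic to some P_j with j̄ > ī. -/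
/-!
Resolve `E` by the horseshoe construction: `Q t = Qₘ t × Qₙ t` with differential
`(x, y) ↦ (dₘ x + χ y, dₙ y)`, where the connecting maps `χ t : Qₙ (t + 1) → Qₘ t` are lifted
one degree at a time through the projectivity of `Qₙ`. Since `Λ` is finite-dimensional, every
indecomposable projective `P j` has finite length, so by Fitting's lemma its endomorphism ring is
local; hence a summand `P j` of `Qₘ t × Qₙ t` is already a summand of `Qₘ t` or of `Qₙ t`, giving
`j ≥ i₁ > i` or `j ≥ i₂ > i` in every degree, degree `0` included.
-/

open CategoryTheory

noncomputable section

variable (k : Type) [Field k] [IsAlgClosed k]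
variable (Λ : Type) [Ring Λ] [Algebra k Λ] [FiniteDimensional k Λ]

/-- `Ext^n_Λ(X, Y)`, as a `k`-module. -/
noncomputable abbrev extGrp (n : ℕ) (X Y : ModuleCat Λ) : ModuleCat k :=
  ((Ext k (ModuleCat Λ) n).obj (Opposite.op X)).obj Y

/-- Nonvanishing of `Ext^n_Λ(X, Y)`. -/
def extNZ (n : ℕ) (X Y : ModuleCat Λ) : Prop := Nontrivial (extGrp k Λ n X Y)

/-- A module is indecomposable. -/
def Indec (M : ModuleCat Λ) : Prop :=
  Nontrivial M ∧ ∀ N₁ N₂ : Submodule Λ M, IsCompl N₁ N₂ → N₁ = ⊥ ∨ N₂ = ⊥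

variable (ι : Type) [Fintype ι] [Preorder ι]

/-- `M` is zero or admits a finite filtration with factors among `{Δ i | ok i}`. -/
def HasFiltBy (Δ : ι → ModuleCat Λ) (ok : ι → Prop)
    (M : Type) [AddCommGroup M] [Module Λ M] : Prop :=
  Subsingleton M ∨
    ∃ (t : ℕ) (F : Fin (t + 1) → Submodule Λ M), Monotone F ∧ F 0 = ⊥ ∧ F (Fin.last t) = ⊤ ∧
      ∀ r : Fin t, ∃ i : ι, ok i ∧
        Nonempty ((↥(F r.succ) ⧸ Submodule.comap (F r.succ).subtype (F r.castSucc)) ≃ₗ[Λ] Δ i)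

/-- Homological system. -/
structure IsHomSys (Δ : ι → ModuleCat Λ) : Prop where
  findim : ∀ i, Module.Finite Λ (Δ i)
  indec : ∀ i, Indec Λ (Δ i)
  pairwise_noniso : ∀ i j, i ≠ j → IsEmpty (Δ i ≅ Δ j)
  hom_le : ∀ i j, (∃ f : Δ i ⟶ Δ j, f ≠ 0) → i ≤ j
  ext_lt : ∀ i j, extNZ k Λ 1 (Δ i) (Δ j) → i < j

/-- Complete irredundant family of representatives of the indecomposable projectives. -/
def IsCompleteProjFam (P : ι → ModuleCat Λ) : Prop :=
  (∀ i, Module.Finite Λ (P i) ∧ Indec Λ (P i) ∧ Projective (P i)) ∧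
  (∀ i j, i ≠ j → IsEmpty (P i ≅ P j)) ∧
  (∀ X : ModuleCat Λ, Module.Finite Λ X → Indec Λ X → Projective X → ∃ i, Nonempty (X ≅ P i))

/-- Admissible homological system. -/
structure IsAdmissibleHomSys.{u_1} (Δ : ι → ModuleCat Λ) extends IsHomSys k Λ ι Δ : Prop where
  lambda_filt : HasFiltBy Λ ι Δ (fun _ => True) Λ
  proj_fam : ∃ P : ι → ModuleCat.{u_1} Λ, IsCompleteProjFam Λ ι P

/-- Projective cover. -/
def IsProjCover {P M : ModuleCat Λ} (p : P ⟶ M) : Prop :=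
  Projective P ∧ Function.Surjective p ∧
    ∀ N : Submodule Λ P, N ⊔ LinearMap.ker p.hom = ⊤ → N = ⊤

/-- A projective resolution `⋯ → Q 1 → Q 0 → M → 0` of `M`. -/
structure IsProjRes (M : ModuleCat Λ) (Q : ℕ → ModuleCat Λ)
    (d : ∀ t : ℕ, Q (t + 1) ⟶ Q t) (ε : Q 0 ⟶ M) : Prop where
  proj : ∀ t, Projective (Q t)
  surj : Function.Surjective ε
  exact0 : LinearMap.range (d 0).hom = LinearMap.ker ε.hom
  exact : ∀ t, LinearMap.range (d (t + 1)).hom = LinearMap.ker (d t).hom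

/-- The resolution is finite. -/
def ResFinite (Q : ℕ → ModuleCat Λ) : Prop := ∃ m, ∀ t, m < t → Subsingleton (Q t)

/-- `X` is (isomorphic to) a direct summand of `Y`. -/
def IsSummand (X Y : ModuleCat Λ) : Prop := ∃ (s : X ⟶ Y) (r : Y ⟶ X), s ≫ r = 𝟙 X

/-- `i`-boundedness of a resolution with respect to the family `P`. -/
def ResBounded (P : ι → ModuleCat Λ) (i : ι) (Q : ℕ → ModuleCat Λ) : Prop :=
  ∀ (t : ℕ) (j : ι), IsSummand Λ (P j) (Q t) → i ≤ j ∧ (0 < t → i < j)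

/-- `M` admits a finite `i`-bounded projective resolution. -/
def HasBoundedProjRes (P : ι → ModuleCat Λ) (i : ι) (M : ModuleCat Λ) : Prop :=
  ∃ (Q : ℕ → ModuleCat Λ) (d : ∀ t : ℕ, Q (t + 1) ⟶ Q t) (ε : Q 0 ⟶ M),
    IsProjRes Λ M Q d ε ∧ ResFinite Λ Q ∧ ResBounded Λ ι P i Q

section LinearAlgebra

open LinearMap

variable {R : Type*} [Ring R]
  {A₀ A₁ A₂ B₀ B₁ B₂ B₃ X : Type*} [AddCommGroup A₀] [AddCommGroup A₁] [AddCommGroup A₂]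
  [AddCommGroup B₀] [AddCommGroup B₁] [AddCommGroup B₂] [AddCommGroup B₃] [AddCommGroup X]
  [Module R A₀] [Module R A₁] [Module R A₂] [Module R B₀] [Module R B₁] [Module R B₂]
  [Module R B₃] [Module R X]

theorem Module.projective_lifting_property_of_range_le [Module.Projective R B₀]
    (ψ : A₀ →ₗ[R] A₁) (φ : B₀ →ₗ[R] A₁) (h : range φ ≤ range ψ) :
    ∃ χ : B₀ →ₗ[R] A₀, ψ ∘ₗ χ = φ := by
  obtain ⟨χ, hχ⟩ := Module.projective_lifting_property ψ.rangeRestrict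
    (φ.codRestrict (range ψ) fun x => h (mem_range_self φ x)) ψ.surjective_rangeRestrict
  exact ⟨χ, ext fun x => congrArg Subtype.val (DFunLike.congr_fun hχ x)⟩

theorem exists_connecting_lift [Module.Projective R B₂]
    (a : A₁ →ₗ[R] A₀) (a' : A₂ →ₗ[R] A₁) (ha : range a' = ker a)
    (b : B₂ →ₗ[R] B₁) (b' : B₃ →ₗ[R] B₂) (hb : range b' ≤ ker b)
    (χ : B₁ →ₗ[R] A₀) (hχ : range (χ ∘ₗ b) ≤ range a) :
    ∃ ψ : B₂ →ₗ[R] A₁, a ∘ₗ ψ = -(χ ∘ₗ b) ∧ range (ψ ∘ₗ b') ≤ range a' := by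
  obtain ⟨ψ, hψ⟩ := Module.projective_lifting_property_of_range_le a (-(χ ∘ₗ b))
    (by rwa [range_neg])
  refine ⟨ψ, hψ, ?_⟩
  rintro _ ⟨y, rfl⟩
  have hby : b (b' y) = 0 := hb (mem_range_self b' y)
  rw [ha, mem_ker]
  simpa [hby] using DFunLike.congr_fun hψ (b' y)

def twistedDiff (a : A₁ →ₗ[R] A₀) (b : B₁ →ₗ[R] B₀) (χ : B₁ →ₗ[R] A₀) :
    A₁ × B₁ →ₗ[R] A₀ × B₀ :=
  (a.coprod χ).prod (b ∘ₗ snd R A₁ B₁)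

@[simp]
theorem twistedDiff_apply (a : A₁ →ₗ[R] A₀) (b : B₁ →ₗ[R] B₀) (χ : B₁ →ₗ[R] A₀) (p : A₁ × B₁) :
    twistedDiff a b χ p = (a p.1 + χ p.2, b p.2) :=
  rfl

theorem range_twistedDiff_eq_ker {a : A₁ →ₗ[R] A₀} {a' : A₂ →ₗ[R] A₁} {b : B₁ →ₗ[R] B₀}
    {b' : B₂ →ₗ[R] B₁} {χ : B₁ →ₗ[R] A₀} {χ' : B₂ →ₗ[R] A₁}
    (ha : range a' = ker a) (hb : range b' = ker b) (hχ : a ∘ₗ χ' = -(χ ∘ₗ b')) :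
    range (twistedDiff a' b' χ') = ker (twistedDiff a b χ) := by
  have haa' : ∀ x, a (a' x) = 0 := fun x => by
    rw [← mem_ker, ← ha]; exact mem_range_self a' x
  have hbb' : ∀ y, b (b' y) = 0 := fun y => by
    rw [← mem_ker, ← hb]; exact mem_range_self b' y
  have hχy : ∀ y, a (χ' y) = -χ (b' y) := fun y => by simpa using DFunLike.congr_fun hχ y
  apply le_antisymm
  · rintro _ ⟨⟨x, y⟩, rfl⟩
    simp [haa', hbb', hχy]
  · rintro ⟨x, y⟩ hxy
    simp only [mem_ker, twistedDiff_apply, Prod.mk_eq_zero] at hxy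
    obtain ⟨y', rfl⟩ : y ∈ range b' := hb ▸ hxy.2
    obtain ⟨x', hx'⟩ : x - χ' y' ∈ range a' := by
      rw [ha, mem_ker, map_sub, hχy, sub_neg_eq_add, hxy.1]
    exact ⟨(x', y'), by simp [hx']⟩

theorem ker_twistedDiff_eq_ker_coprod {a : A₁ →ₗ[R] A₀} {b : B₁ →ₗ[R] B₀} {χ : B₁ →ₗ[R] A₀}
    {g : A₀ →ₗ[R] B₀} (hga : g ∘ₗ a = 0) (hgχ : g ∘ₗ χ = b) :
    ker (twistedDiff a b χ) = ker (a.coprod χ) := by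
  refine (ker_prod _ _).trans (inf_eq_left.mpr fun p hp => ?_)
  rw [mem_ker, coprod_apply] at hp
  have := congrArg g hp
  rw [map_add, ← comp_apply g a, hga, ← comp_apply g χ, hgχ] at this
  simpa using this

theorem surjective_coprod {a : A₁ →ₗ[R] A₀} {b : B₁ →ₗ[R] B₀} {χ : B₁ →ₗ[R] A₀}
    {g : A₀ →ₗ[R] B₀} (ha : range a = ker g) (hgχ : g ∘ₗ χ = b) (hb : Function.Surjective b) :
    Function.Surjective (a.coprod χ) := by
  intro e
  obtain ⟨y, hy⟩ := hb (g e)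
  obtain ⟨x, hx⟩ : e - χ y ∈ range a := by
    rw [ha, mem_ker, map_sub, ← comp_apply g χ, hgχ, hy, sub_self]
  exact ⟨(x, y), by simp [hx]⟩

end LinearAlgebra

universe v

section Horseshoe

open LinearMap

variable {Λ} {M E N : ModuleCat.{v} Λ} {f : M ⟶ E} {g : E ⟶ N}
  {Qm : ℕ → ModuleCat.{v} Λ} {dm : ∀ t, Qm (t + 1) ⟶ Qm t} {εm : Qm 0 ⟶ M}
  {Qn : ℕ → ModuleCat.{v} Λ} {dn : ∀ t, Qn (t + 1) ⟶ Qn t} {εn : Qn 0 ⟶ N}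

theorem IsProjRes.moduleProjective {Q : ℕ → ModuleCat.{v} Λ} {d : ∀ t, Q (t + 1) ⟶ Q t}
    {ε : Q 0 ⟶ M} (hR : IsProjRes Λ M Q d ε) (t : ℕ) : Module.Projective Λ (Q t) :=
  (IsProjective.iff_projective (Q t)).mpr (hR.proj t)

theorem exists_connecting_maps (hRm : IsProjRes Λ M Qm dm εm) (hRn : IsProjRes Λ N Qn dn εn)
    (δ : Qm 0 →ₗ[Λ] E) (hδ : range (dm 0).hom = ker δ) (σ : Qn 0 →ₗ[Λ] E)
    (hσ : range (σ ∘ₗ (dn 0).hom) ≤ range δ) :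
    ∃ χ : ∀ t, Qn (t + 1) →ₗ[Λ] Qm t, δ ∘ₗ χ 0 = -(σ ∘ₗ (dn 0).hom) ∧
      ∀ t, (dm t).hom ∘ₗ χ (t + 1) = -(χ t ∘ₗ (dn (t + 1)).hom) := by
  have := hRn.moduleProjective
  obtain ⟨χ₀, hχ₀, hlift₀⟩ := exists_connecting_lift δ _ hδ _ _ (hRn.exact 0).le σ hσ
  have step : ∀ t (χ : Qn (t + 1) →ₗ[Λ] Qm t), range (χ ∘ₗ (dn (t + 1)).hom) ≤ range (dm t).hom →
      ∃ ψ : Qn (t + 2) →ₗ[Λ] Qm (t + 1), (dm t).hom ∘ₗ ψ = -(χ ∘ₗ (dn (t + 1)).hom) ∧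
        range (ψ ∘ₗ (dn (t + 2)).hom) ≤ range (dm (t + 1)).hom :=
    fun t χ hχ => exists_connecting_lift _ _ (hRm.exact t) _ _ (hRn.exact (t + 1)).le χ hχ
  choose next hnext hnext_lift using step
  let χ : ∀ t, {χ : Qn (t + 1) →ₗ[Λ] Qm t // range (χ ∘ₗ (dn (t + 1)).hom) ≤ range (dm t).hom} :=
    fun t => Nat.rec ⟨χ₀, hlift₀⟩ (fun t c => ⟨next t c.1 c.2, hnext_lift t c.1 c.2⟩) t
  exact ⟨fun t => (χ t).1, hχ₀, fun t => hnext t _ _⟩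

theorem IsProjRes.horseshoe (hf : Function.Injective f) (hg : Function.Surjective g)
    (hfg : range f.hom = ker g.hom) (hRm : IsProjRes Λ M Qm dm εm)
    (hRn : IsProjRes Λ N Qn dn εn) :
    ∃ (d : ∀ t, ModuleCat.of Λ (Qm (t + 1) × Qn (t + 1)) ⟶ ModuleCat.of Λ (Qm t × Qn t))
      (ε : ModuleCat.of Λ (Qm 0 × Qn 0) ⟶ E),
      IsProjRes Λ E (fun t => ModuleCat.of Λ (Qm t × Qn t)) d ε := by
  have := hRn.moduleProjective
  obtain ⟨σ, hσ⟩ := Module.projective_lifting_property g.hom εn.hom hg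
  have hrange : range (f.hom ∘ₗ εm.hom) = ker g.hom := by
    rw [range_comp_of_range_eq_top _ (range_eq_top.mpr hRm.surj), hfg]
  have hker : range (dm 0).hom = ker (f.hom ∘ₗ εm.hom) := by
    rw [ker_comp_of_ker_eq_bot _ (ker_eq_bot.mpr hf), hRm.exact0]
  have hσ_lift : range (σ ∘ₗ (dn 0).hom) ≤ range (f.hom ∘ₗ εm.hom) := by
    rintro _ ⟨y, rfl⟩
    rw [hrange, mem_ker, LinearMap.comp_apply, ← LinearMap.comp_apply g.hom σ, hσ, ← mem_ker,
      ← hRn.exact0]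
    exact mem_range_self _ y
  obtain ⟨χ, hχ₀, hχ⟩ := exists_connecting_maps hRm hRn _ hker σ hσ_lift
  refine ⟨fun t => ModuleCat.ofHom (twistedDiff (dm t).hom (dn t).hom (χ t)),
    ModuleCat.ofHom ((f.hom ∘ₗ εm.hom).coprod σ), ⟨fun t => ?_, ?_, ?_, fun t => ?_⟩⟩
  · have := hRm.proj t
    have := hRn.proj t
    exact Projective.of_iso (ModuleCat.biprodIsoProd (Qm t) (Qn t)) inferInstance
  · exact surjective_coprod hrange hσ hRn.surj
  · rw [ModuleCat.hom_ofHom, ModuleCat.hom_ofHom,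
      ← ker_twistedDiff_eq_ker_coprod (range_le_ker_iff.mp hrange.le) hσ]
    exact range_twistedDiff_eq_ker hker hRn.exact0 hχ₀
  · exact range_twistedDiff_eq_ker (hRm.exact t) (hRn.exact t) (hχ t)

theorem ResFinite.prod {Qm Qn : ℕ → ModuleCat Λ} (hm : ResFinite Λ Qm) (hn : ResFinite Λ Qn) :
    ResFinite Λ (fun t => ModuleCat.of Λ (Qm t × Qn t)) := by
  obtain ⟨m, hm⟩ := hm
  obtain ⟨n, hn⟩ := hn
  refine ⟨max m n, fun t ht => ?_⟩
  have := hm t ((le_max_left m n).trans_lt ht)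
  have := hn t ((le_max_right m n).trans_lt ht)
  exact inferInstanceAs (Subsingleton (Qm t × Qn t))

end Horseshoe

section KrullSchmidt

theorem Module.End.isUnit_or_isUnit_one_sub {R X : Type*} [Ring R] [AddCommGroup X] [Module R X]
    [IsArtinian R X] [IsNoetherian R X]
    (hind : ∀ N₁ N₂ : Submodule R X, IsCompl N₁ N₂ → N₁ = ⊥ ∨ N₂ = ⊥) (e : Module.End R X) :
    IsUnit e ∨ IsUnit (1 - e) := by
  obtain ⟨n, hn⟩ := Filter.eventually_atTop.mp e.eventually_isCompl_ker_pow_range_pow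
  rcases hind _ _ (hn (n + 1) n.le_succ) with hker | hrange
  · have hinj : Function.Injective e := by
      rw [pow_succ, Module.End.mul_eq_comp, LinearMap.ker_eq_bot, LinearMap.coe_comp] at hker
      exact hker.of_comp
    exact Or.inl <| (Module.End.isUnit_iff e).mpr
      (IsArtinian.bijective_of_injective_endomorphism e hinj)
  · exact Or.inr <| IsNilpotent.isUnit_one_sub ⟨n + 1, LinearMap.range_eq_bot.mp hrange⟩

variable {Λ}

theorem isSummand_of_isUnit_comp {X Y : ModuleCat.{v} Λ} (s : X →ₗ[Λ] Y) (r : Y →ₗ[Λ] X)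
    (h : IsUnit (r ∘ₗ s : Module.End Λ X)) : IsSummand Λ X Y := by
  refine ⟨ModuleCat.ofHom s, ModuleCat.ofHom (↑h.unit⁻¹ ∘ₗ r), ?_⟩
  ext x
  exact DFunLike.congr_fun h.val_inv_mul x

theorem IsSummand.of_prod {X Y Z : ModuleCat.{v} Λ} [IsArtinian Λ X] [IsNoetherian Λ X]
    (hX : Indec Λ X) (h : IsSummand Λ X (ModuleCat.of Λ (Y × Z))) :
    IsSummand Λ X Y ∨ IsSummand Λ X Z := by
  obtain ⟨s, r, hsr⟩ := h
  have hrs : ∀ x, r.hom (s.hom x) = x := fun x => congrArg (fun φ => φ.hom x) hsr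
  let e : Module.End Λ X := (r.hom ∘ₗ LinearMap.inl Λ Y Z) ∘ₗ (LinearMap.fst Λ Y Z ∘ₗ s.hom)
  have he : 1 - e = (r.hom ∘ₗ LinearMap.inr Λ Y Z) ∘ₗ (LinearMap.snd Λ Y Z ∘ₗ s.hom) := by
    ext x
    simp [e, sub_eq_iff_eq_add, ← map_add, hrs]
  rcases Module.End.isUnit_or_isUnit_one_sub hX.2 e with hu | hu
  · exact Or.inl (isSummand_of_isUnit_comp _ _ hu)
  · exact Or.inr (isSummand_of_isUnit_comp _ _ (he ▸ hu))

end KrullSchmidt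

theorem statement2 (Δ : ι → ModuleCat Λ) (h : IsAdmissibleHomSys k Λ ι Δ)
    (P : ι → ModuleCat Λ) (hP : IsCompleteProjFam Λ ι P)
    (i i₁ i₂ : ι) (hi₁ : i < i₁) (hi₂ : i < i₂)
    (M E N : ModuleCat Λ)
    (f : M ⟶ E) (g : E ⟶ N)
    (hf : Function.Injective f) (hg : Function.Surjective g)
    (hfg : LinearMap.range f.hom = LinearMap.ker g.hom)
    (hM : HasBoundedProjRes Λ ι P i₁ M) (hN : HasBoundedProjRes Λ ι P i₂ N) :
    ∃ (Q : ℕ → ModuleCat Λ) (d : ∀ t : ℕ, Q (t + 1) ⟶ Q t) (ε : Q 0 ⟶ E),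
      IsProjRes Λ E Q d ε ∧ ResFinite Λ Q ∧ ResBounded Λ ι P i Q ∧
        ∀ j : ι, IsSummand Λ (P j) (Q 0) → i < j := by
  obtain ⟨Qm, dm, εm, hRm, hfinm, hBm⟩ := hM
  obtain ⟨Qn, dn, εn, hRn, hfinn, hBn⟩ := hN
  obtain ⟨d, ε, hR⟩ := hRm.horseshoe hf hg hfg hRn
  have : IsArtinianRing Λ := IsArtinianRing.of_finite k Λ
  have hbound : ∀ t j, IsSummand Λ (P j) (ModuleCat.of Λ (Qm t × Qn t)) → i < j := by
    intro t j hj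
    have := (hP.1 j).1
    rcases hj.of_prod (hP.1 j).2.1 with hjm | hjn
    · exact hi₁.trans_le (hBm t j hjm).1
    · exact hi₂.trans_le (hBn t j hjn).1
  exact ⟨_, d, ε, hR, hfinm.prod hfinn,
    fun t j hj => ⟨(hbound t j hj).le, fun _ => hbound t j hj⟩, hbound 0⟩

end
end

section
/- Let (𝒫, ≤) be a finite preordered set with quotient poset 𝒫̄ = 𝒫/∼ of cardinality ℓ, and let S = ∏_{i∈𝒫} k with idempotents e_i. Let U and V be S-S-bimodules such that e_j U e_i ≠ 0 implies ī < j̄ in 𝒫̄ (i.e. i ≤ j and i ≁ j), and e_j V e_i ≠ 0 implies i ≤ j. Then for every n ≥ 1 and every sequence X_1, …, X_n of S-S-bimodules with each X_m ∈ {U, V}: if strictly more than ℓ of the X_m are equal to U, then the tensor product X_n ⊗_S ⋯ ⊗_S X_1 is the zero module. Equivalently, in the tensor power (U ⊕ V)^{⊗_S n}, graded by assigning degree 0 to U and degree 1 to V, every nonzero homogeneous element h satisfies |h| ≥ n − ℓ. -/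
/-!
Expanding every factor along the idempotents, `x = ∑ e_j x e_i`, writes each pure tensor as a
sum of pure tensors of pieces `e_{j_m} x_m e_{i_m}`. Balancing moves `e_{i_{m+1}}` from
`x_{m+1}` onto `x_m`, so such a term vanishes unless `i_{m+1} = j_m` for all `m`. If moreover
all pieces are nonzero, the hypotheses on `U` and `V` make `i_0 ≤ j_0 = i_1 ≤ j_1 = ⋯` a chain
in `𝒫`, strict at every factor `U`; more than `ℓ` strict steps would give more than `ℓ`
distinct classes in `𝒫̄`.

Bimodules are encoded as `k`-modules with two commuting actions of `S := ι → k`, and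
the `n`-fold balanced tensor product as the quotient of the `n`-fold tensor product
over `k` by the balancing relations between adjacent factors.
-/

/-- An `S`-`S`-bimodule structure (with `k` acting centrally) on the `k`-module `M`. -/
structure BimodAct (k S M : Type) [CommRing k] [CommRing S] [Algebra k S]
    [AddCommGroup M] [Module k M] where
  l : S →ₐ[k] Module.End k M
  r : S →ₐ[k] Module.End k M
  comm : ∀ s t : S, (l s) * (r t) = (r t) * (l s)

namespace BimodAct

variable {k S M : Type} [CommRing k] [CommRing S] [Algebra k S] [AddCommGroup M] [Module k M]
  (a : BimodAct k S M)

theorem r_l_r_of_isIdempotentElem {t : S} (ht : IsIdempotentElem t) (s : S) (z : M) :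
    a.r t (a.l s (a.r t z)) = a.l s (a.r t z) := by
  rw [← Module.End.mul_apply, ← a.comm, Module.End.mul_apply, ← Module.End.mul_apply (a.r t),
    ← map_mul, ht.eq]

theorem l_l_eq_zero_of_mul_eq_zero {s t : S} (h : s * t = 0) (z : M) : a.l s (a.l t z) = 0 := by
  rw [← Module.End.mul_apply, ← map_mul, h, map_zero, LinearMap.zero_apply]

theorem sum_l_r_of_completeOrthogonalIdempotents {ι : Type} [Fintype ι] {e : ι → S}
    (he : CompleteOrthogonalIdempotents e) (z : M) :
    ∑ p : ι × ι, a.l (e p.1) (a.r (e p.2) z) = z := by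
  simp only [Fintype.sum_prod_type, ← map_sum, ← LinearMap.sum_apply, he.complete, map_one,
    Module.End.one_apply]

end BimodAct

theorem Finset.card_le_card_antisymmetrization {α β : Type*} [Preorder α] [Finite α]
    [LinearOrder β] {f : β → α} {T : Finset β} (hf : ∀ m ∈ T, ∀ m' < m, f m' < f m) :
    T.card ≤ Nat.card (Antisymmetrization α (· ≤ ·)) := by
  have hinj : Function.Injective fun m : T => toAntisymmetrization (· ≤ ·) (f m) := by
    intro m₁ m₂ h
    by_contra hne
    rcases lt_or_gt_of_ne (Subtype.coe_ne_coe.mpr hne) with hlt | hlt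
    · exact (toAntisymmetrization_lt_toAntisymmetrization_iff.mpr (hf _ m₂.2 _ hlt)).ne h
    · exact (toAntisymmetrization_lt_toAntisymmetrization_iff.mpr (hf _ m₁.2 _ hlt)).ne' h
  have : Finite (Antisymmetrization α (· ≤ ·)) := Quotient.finite _
  simpa using Nat.card_le_card_of_injective _ hinj

theorem fst_le_snd_of_lt_of_chain {α : Type*} [Preorder α] {n : ℕ} {c : Fin n → α × α}
    (hle : ∀ m, (c m).2 ≤ (c m).1)
    (hmatch : ∀ (m : ℕ) (hm : m + 1 < n),
      (c ⟨m + 1, hm⟩).2 = (c ⟨m, Nat.lt_of_succ_lt hm⟩).1)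
    {m' m : Fin n} (h : m' < m) : (c m').1 ≤ (c m).2 := by
  obtain ⟨m, hm⟩ := m
  induction m with
  | zero => exact absurd (Fin.lt_def.mp h) (Nat.not_lt_zero _)
  | succ m ih =>
    rw [hmatch m hm]
    rcases (Nat.lt_succ_iff.mp (Fin.lt_def.mp h)).lt_or_eq with hlt | heq
    · exact (ih (Nat.lt_of_succ_lt hm) hlt).trans (hle _)
    · rw [show m' = ⟨m, Nat.lt_of_succ_lt hm⟩ from Fin.ext heq]

theorem card_le_card_antisymmetrization_of_chain {α : Type*} [Preorder α] [Finite α] {n : ℕ}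
    {c : Fin n → α × α} (hle : ∀ m, (c m).2 ≤ (c m).1)
    (hmatch : ∀ (m : ℕ) (hm : m + 1 < n),
      (c ⟨m + 1, hm⟩).2 = (c ⟨m, Nat.lt_of_succ_lt hm⟩).1)
    {T : Finset (Fin n)} (hlt : ∀ m ∈ T, (c m).2 < (c m).1) :
    T.card ≤ Nat.card (Antisymmetrization α (· ≤ ·)) :=
  Finset.card_le_card_antisymmetrization fun m hm _ h =>
    (fst_le_snd_of_lt_of_chain hle hmatch h).trans_lt (hlt m hm)

noncomputable section

variable (k : Type) [Field k]
variable (ι : Type) [Fintype ι] [DecidableEq ι] [Preorder ι]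

/-- The idempotent `e i` of `S = ι → k`. -/
def idem (i : ι) : ι → k := Pi.single i 1

/-- `φ` is an isomorphism of `S`-`S`-bimodules. -/
def IsBimodIso {X Y : Type} [AddCommGroup X] [Module k X] [AddCommGroup Y] [Module k Y]
    (aX : BimodAct k (ι → k) X) (aY : BimodAct k (ι → k) Y) (φ : X ≃ₗ[k] Y) : Prop :=
  (∀ (s : ι → k) (x : X), φ (aX.l s x) = aY.l s (φ x)) ∧
  (∀ (s : ι → k) (x : X), φ (aX.r s x) = aY.r s (φ x))

/-- The balancing relations between adjacent factors of the tensor product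
`X (n-1) ⊗ ⋯ ⊗ X 0` (the factor `X m` is written to the right of `X (m+1)`):
`(x·s) ⊗ y - x ⊗ (s·y)`. -/
def relSetP (n : ℕ) (X : Fin n → Type) [∀ m, AddCommGroup (X m)] [∀ m, Module k (X m)]
    (aX : ∀ m, BimodAct k (ι → k) (X m)) : Set (PiTensorProduct k X) :=
  {z | ∃ (m : ℕ) (hm : m + 1 < n) (s : ι → k) (x : ∀ u, X u),
    z = PiTensorProduct.tprod k
          (Function.update x ⟨m + 1, hm⟩ ((aX ⟨m + 1, hm⟩).r s (x ⟨m + 1, hm⟩)))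
      - PiTensorProduct.tprod k
          (Function.update x ⟨m, Nat.lt_of_succ_lt hm⟩
            ((aX ⟨m, Nat.lt_of_succ_lt hm⟩).l s (x ⟨m, Nat.lt_of_succ_lt hm⟩)))}

/-- The `S`-balanced tensor product `X (n-1) ⊗_S ⋯ ⊗_S X 0`. -/
abbrev TensP (n : ℕ) (X : Fin n → Type) [∀ m, AddCommGroup (X m)] [∀ m, Module k (X m)]
    (aX : ∀ m, BimodAct k (ι → k) (X m)) :=
  (PiTensorProduct k X) ⧸ Submodule.span k (relSetP k ι n X aX)

theorem completeOrthogonalIdempotents_idem {k ι : Type} [Field k] [Fintype ι] [DecidableEq ι] :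
    CompleteOrthogonalIdempotents (idem k ι) :=
  CompleteOrthogonalIdempotents.single fun _ => k

theorem IsBimodIso.exists_l_r_ne_zero {k ι X Y : Type} [Field k] [AddCommGroup X] [Module k X]
    [AddCommGroup Y] [Module k Y] {aX : BimodAct k (ι → k) X} {aY : BimodAct k (ι → k) Y}
    {φ : X ≃ₗ[k] Y} (hφ : IsBimodIso k ι aX aY φ) {s t : ι → k} {x : X}
    (hx : aX.l s (aX.r t x) ≠ 0) : ∃ y : Y, aY.l s (aY.r t y) ≠ 0 :=
  ⟨φ x, by rwa [← hφ.2, ← hφ.1, φ.map_ne_zero_iff]⟩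

theorem tprod_mem_span_relSetP {k ι : Type} [Field k] {n : ℕ} {X : Fin n → Type}
    [∀ m, AddCommGroup (X m)] [∀ m, Module k (X m)] {aX : ∀ m, BimodAct k (ι → k) (X m)}
    {y : ∀ m, X m} {m : ℕ}
    (hm : m + 1 < n) {s : ι → k}
    (hr : (aX ⟨m + 1, hm⟩).r s (y ⟨m + 1, hm⟩) = y ⟨m + 1, hm⟩)
    (hl : (aX ⟨m, Nat.lt_of_succ_lt hm⟩).l s (y ⟨m, Nat.lt_of_succ_lt hm⟩) = 0) :
    PiTensorProduct.tprod k y ∈ Submodule.span k (relSetP k ι n X aX) := by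
  have hrel := Submodule.subset_span (R := k) (s := relSetP k ι n X aX) ⟨m, hm, s, y, rfl⟩
  rwa [hr, hl, Function.update_eq_self, MultilinearMap.map_update_zero, sub_zero] at hrel

theorem statement8
    {U V : Type} [AddCommGroup U] [Module k U] [AddCommGroup V] [Module k V]
    (aU : BimodAct k (ι → k) U) (aV : BimodAct k (ι → k) V)
    (hU : ∀ i j : ι, (∃ u : U, aU.l (idem k ι j) (aU.r (idem k ι i) u) ≠ 0) → i < j)
    (hV : ∀ i j : ι, (∃ v : V, aV.l (idem k ι j) (aV.r (idem k ι i) v) ≠ 0) → i ≤ j)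
    (n : ℕ)
    (X : Fin n → Type) [∀ m, AddCommGroup (X m)] [∀ m, Module k (X m)]
    (aX : ∀ m, BimodAct k (ι → k) (X m))
    (isU : Fin n → Bool)
    (hiso : ∀ m, (isU m = true → ∃ φ : X m ≃ₗ[k] U, IsBimodIso k ι (aX m) aU φ) ∧
                 (isU m = false → ∃ φ : X m ≃ₗ[k] V, IsBimodIso k ι (aX m) aV φ))
    (hcount : Nat.card (Antisymmetrization ι (· ≤ ·)) <
      (Finset.univ.filter (fun m => isU m = true)).card) :
    Subsingleton (TensP k ι n X aX) := by
  rw [Submodule.Quotient.subsingleton_iff, eq_top_iff, ← PiTensorProduct.span_tprod_eq_top,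
    Submodule.span_le]
  rintro _ ⟨x, rfl⟩
  have he := completeOrthogonalIdempotents_idem (k := k) (ι := ι)
  rw [SetLike.mem_coe, ← funext fun m => (aX m).sum_l_r_of_completeOrthogonalIdempotents he (x m),
    MultilinearMap.map_sum]
  refine Submodule.sum_mem _ fun c _ => ?_
  set y := fun m => (aX m).l (idem k ι (c m).1) ((aX m).r (idem k ι (c m).2) (x m))
  by_cases hzero : ∃ m, y m = 0
  · obtain ⟨m, hm⟩ := hzero
    rw [MultilinearMap.map_coord_zero _ m hm]
    exact Submodule.zero_mem _
  push Not at hzero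
  have hstep : ∀ m, (c m).2 ≤ (c m).1 ∧ (isU m = true → (c m).2 < (c m).1) := by
    intro m
    cases hb : isU m
    · obtain ⟨φ, hφ⟩ := (hiso m).2 hb
      exact ⟨hV _ _ (hφ.exists_l_r_ne_zero (hzero m)), nofun⟩
    · obtain ⟨φ, hφ⟩ := (hiso m).1 hb
      have hlt := hU _ _ (hφ.exists_l_r_ne_zero (hzero m))
      exact ⟨hlt.le, fun _ => hlt⟩
  by_cases hmatch : ∀ (m : ℕ) (hm : m + 1 < n),
      (c ⟨m + 1, hm⟩).2 = (c ⟨m, Nat.lt_of_succ_lt hm⟩).1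
  · refine absurd hcount (not_lt.mpr ?_)
    exact card_le_card_antisymmetrization_of_chain (fun m => (hstep m).1) hmatch
      fun m hm => (hstep m).2 (Finset.mem_filter.mp hm).2
  · push Not at hmatch
    obtain ⟨m, hm, hne⟩ := hmatch
    exact tprod_mem_span_relSetP hm
      ((aX _).r_l_r_of_isIdempotentElem (he.idem _) _ _)
      ((aX _).l_l_eq_zero_of_mul_eq_zero (he.ortho hne) _)

end
end
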